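/- Let n ∈ ℤ_{≥0}^r and 1 ≤ k, l ≤ r with k ≠ l. (a) If n_k, n_l ≥ 1 and n, n − e_k, n − e_l, n − e_k − e_l are normal, then β_n (α_{n−e_l} − α_{n−e_k}) = (β_{n−e_k} − β_{n−e_l}) α_{n−e_k−e_l}. (b) If in addition n + e_k − e_l is normal and every index of the form n − e_j and n − e_l − e_j lying in ℤ_{≥0}^r is normal (so that ρ_{n,k} and ρ_{n−e_l,k} are defined), then (α_{n−e_l} − α_{n−e_k}) α_{n−e_l} ρ_{n,k} = (α_{n+e_k−e_l} − α_n) α_{n−e_k−e_l} ρ_{n−e_l,k}. -/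

import Mathlib

open MeasureTheory Polynomial

noncomputable section

/-- A system of measures on the unit circle: each `μ j` is a probability measure,
carried by the unit circle `∂𝔻 = {z : |z| = 1}`, with infinite support. -/
def MopucSystem {r : ℕ} (μ : Fin r → Measure ℂ) : Prop :=
  ∀ j, IsProbabilityMeasure (μ j) ∧ μ j ((Metric.sphere (0 : ℂ) 1)ᶜ) = 0 ∧
    ∀ s : Set ℂ, s.Finite → μ j (sᶜ) ≠ 0

/-- The inner product `⟨P, Q⟩_μ = ∫ P(z)·conj (Q(z)) dμ(z)`. -/
def pip (μ : Measure ℂ) (P Q : Polynomial ℂ) : ℂ :=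
  ∫ z, P.eval z * (starRingEnd ℂ) (Q.eval z) ∂μ

/-- `⟨P, z^p⟩_μ`. -/
def mip (μ : Measure ℂ) (P : Polynomial ℂ) (p : ℕ) : ℂ :=
  pip μ P (X ^ p)

/-- The moment `ν^p = ∫ z^p dμ(z)` for `p ∈ ℤ` (on the circle `z^{-m} = conj (z^m)`). -/
def mom (μ : Measure ℂ) (p : ℤ) : ℂ :=
  ∫ z, z ^ p ∂μ

/-- The linear position of the pair `(j, q)` (with `q < n j`): `(∑_{i<j} n i) + q`.
This enumerates the pairs, in lexicographic order, by `0, 1, …, |n| − 1`. -/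
def linIdx {r : ℕ} (n : Fin r → ℕ) (c : (j : Fin r) × Fin (n j)) : ℕ :=
  (∑ i ∈ Finset.univ.filter (fun i => i < c.1), n i) + (c.2 : ℕ)

/-- The moment matrix `M_n`: rows are indexed by pairs `(j, q)` with `1 ≤ j ≤ r`,
`0 ≤ q ≤ n j − 1`, columns by `p = 0, …, |n| − 1` (realized as pairs via the
order-preserving enumeration `linIdx`), and the entry at `((j,q), p)` is `ν_j^{p−q}`. -/
def Mmat {r : ℕ} (μ : Fin r → Measure ℂ) (n : Fin r → ℕ) :
    Matrix ((j : Fin r) × Fin (n j)) ((j : Fin r) × Fin (n j)) ℂ :=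
  Matrix.of fun rq c => mom (μ rq.1) ((linIdx n c : ℤ) - ((rq.2 : ℕ) : ℤ))

/-- The index `n` is normal if `det M_n ≠ 0`.  (For `n = 0` the matrix is empty and its
determinant is `1`, so `n = 0` is normal, matching the convention of the paper.) -/
def NormalIndex {r : ℕ} (μ : Fin r → Measure ℂ) (n : Fin r → ℕ) : Prop :=
  (Mmat μ n).det ≠ 0

/-- A type II multiple orthogonal polynomial for the multi-index `n`. -/
def IsTypeII {r : ℕ} (μ : Fin r → Measure ℂ) (n : Fin r → ℕ) (P : Polynomial ℂ) : Prop :=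
  P ≠ 0 ∧ P.degree ≤ ((∑ j, n j : ℕ) : WithBot ℕ) ∧
    ∀ j, ∀ p : ℕ, p < n j → mip (μ j) P p = 0

/-- A type II* multiple orthogonal polynomial for the multi-index `n`. -/
def IsTypeIIStar {r : ℕ} (μ : Fin r → Measure ℂ) (n : Fin r → ℕ) (P : Polynomial ℂ) : Prop :=
  P ≠ 0 ∧ P.degree ≤ ((∑ j, n j : ℕ) : WithBot ℕ) ∧
    ∀ j, ∀ p : ℕ, 1 ≤ p → p ≤ n j → mip (μ j) P p = 0

/-- A type I multiple orthogonal polynomial for the multi-index `n`: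
a nonzero vector of polynomials with `deg (L j) ≤ n j − 1` (so `L j = 0` when `n j = 0`),
and `∑_j ⟨L j, z^p⟩_j = 0` for `p = 0, …, |n| − 2`. -/
def IsTypeI {r : ℕ} (μ : Fin r → Measure ℂ) (n : Fin r → ℕ) (L : Fin r → Polynomial ℂ) : Prop :=
  L ≠ 0 ∧ (∀ j, (L j).degree < ((n j : ℕ) : WithBot ℕ)) ∧
    ∀ p : ℕ, p + 2 ≤ ∑ j, n j → ∑ j, mip (μ j) (L j) p = 0

/-- A type I* multiple orthogonal polynomial for the multi-index `n`:
a nonzero vector of polynomials with `deg (L j) ≤ n j − 1`,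
and `∑_j ⟨L j, z^p⟩_j = 0` for `p = 1, …, |n| − 1`. -/
def IsTypeIStar {r : ℕ} (μ : Fin r → Measure ℂ) (n : Fin r → ℕ) (L : Fin r → Polynomial ℂ) : Prop :=
  L ≠ 0 ∧ (∀ j, (L j).degree < ((n j : ℕ) : WithBot ℕ)) ∧
    ∀ p : ℕ, 1 ≤ p → p + 1 ≤ ∑ j, n j → ∑ j, mip (μ j) (L j) p = 0

/-- `Φ_n`: the monic type II polynomial of degree exactly `|n|`. -/
def IsPhi {r : ℕ} (μ : Fin r → Measure ℂ) (n : Fin r → ℕ) (P : Polynomial ℂ) : Prop :=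
  IsTypeII μ n P ∧ P.Monic ∧ P.natDegree = ∑ j, n j

/-- `Φ*_n`: the type II* polynomial with `Φ*_n(0) = 1`. -/
def IsPhiStar {r : ℕ} (μ : Fin r → Measure ℂ) (n : Fin r → ℕ) (P : Polynomial ℂ) : Prop :=
  IsTypeIIStar μ n P ∧ P.eval 0 = 1

/-- `Λ_n`: the type I vector normalized by `∑_j ⟨Λ_{n,j}, z^{|n|−1}⟩_j = 1`. -/
def IsLambda {r : ℕ} (μ : Fin r → Measure ℂ) (n : Fin r → ℕ) (L : Fin r → Polynomial ℂ) : Prop :=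
  IsTypeI μ n L ∧ ∑ j, mip (μ j) (L j) ((∑ i, n i) - 1) = 1

/-- `Λ*_n`: the type I* vector normalized by `∑_j ⟨Λ*_{n,j}, 1⟩_j = 1`. -/
def IsLambdaStar {r : ℕ} (μ : Fin r → Measure ℂ) (n : Fin r → ℕ) (L : Fin r → Polynomial ℂ) : Prop :=
  IsTypeIStar μ n L ∧ ∑ j, mip (μ j) (L j) 0 = 1

/-- The multi-index `n + e_k`. -/
def eAdd {r : ℕ} (n : Fin r → ℕ) (k : Fin r) : Fin r → ℕ :=
  Function.update n k (n k + 1)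

/-- The multi-index `n − e_k` (used only when `n k ≥ 1`). -/
def eSub {r : ℕ} (n : Fin r → ℕ) (k : Fin r) : Fin r → ℕ :=
  Function.update n k (n k - 1)

section Aux
variable {r : ℕ} {μ : Fin r → Measure ℂ}

lemma ae_one (hμ : MopucSystem μ) (j : Fin r) : ∀ᵐ z ∂(μ j), ‖z‖ = 1 := by
  have h := (hμ j).2.1
  have h2 : ∀ᵐ z ∂(μ j), z ∈ Metric.sphere (0:ℂ) 1 := by
    rw [MeasureTheory.ae_iff]
    simpa [Set.compl_def] using h
  filter_upwards [h2] with z hz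
  simpa using hz

lemma integrable_aux (hμ : MopucSystem μ) (j : Fin r) (P : Polynomial ℂ) (p : ℕ) :
    Integrable (fun z => P.eval z * (starRingEnd ℂ) (z ^ p)) (μ j) := by
  have : IsProbabilityMeasure (μ j) := (hμ j).1
  refine (integrable_const (∑ i ∈ Finset.range (P.natDegree+1), ‖P.coeff i‖)).mono' ?_ ?_
  · exact (P.continuous_aeval.mul (continuous_star.comp (continuous_pow p))).aestronglyMeasurable
  · filter_upwards [ae_one hμ j] with z hz
    have h1 : ‖P.eval z‖ ≤ ∑ i ∈ Finset.range (P.natDegree+1), ‖P.coeff i‖ := by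
      rw [Polynomial.eval_eq_sum_range]
      refine (norm_sum_le _ _).trans ?_
      refine Finset.sum_le_sum fun i _ => ?_
      rw [norm_mul, norm_pow, hz, one_pow, mul_one]
    calc ‖P.eval z * (starRingEnd ℂ) (z^p)‖ = ‖P.eval z‖ := by
          rw [norm_mul]
          have : ‖(starRingEnd ℂ) (z^p)‖ = 1 := by
            rw [RCLike.norm_conj, norm_pow, hz, one_pow]
          rw [this, mul_one]
      _ ≤ _ := h1

lemma mip_def (ν : Measure ℂ) (P : Polynomial ℂ) (p : ℕ) :
    mip ν P p = ∫ z, P.eval z * (starRingEnd ℂ) (z ^ p) ∂ν := by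
  simp [mip, pip]

lemma mip_zero (ν : Measure ℂ) (p : ℕ) : mip ν 0 p = 0 := by simp [mip_def]

lemma mip_add (hμ : MopucSystem μ) (j : Fin r) (P Q : Polynomial ℂ) (p : ℕ) :
    mip (μ j) (P + Q) p = mip (μ j) P p + mip (μ j) Q p := by
  simp only [mip_def, eval_add, add_mul]
  exact integral_add (integrable_aux hμ j P p) (integrable_aux hμ j Q p)

lemma mip_neg (ν : Measure ℂ) (P : Polynomial ℂ) (p : ℕ) :
    mip ν (-P) p = - mip ν P p := by
  simp only [mip_def, eval_neg, neg_mul]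
  exact integral_neg _

lemma mip_sub (hμ : MopucSystem μ) (j : Fin r) (P Q : Polynomial ℂ) (p : ℕ) :
    mip (μ j) (P - Q) p = mip (μ j) P p - mip (μ j) Q p := by
  rw [sub_eq_add_neg, mip_add hμ, mip_neg, sub_eq_add_neg]

lemma mip_C_mul (ν : Measure ℂ) (a : ℂ) (P : Polynomial ℂ) (p : ℕ) :
    mip ν (C a * P) p = a * mip ν P p := by
  simp only [mip_def, eval_mul, eval_C, mul_assoc]
  exact MeasureTheory.integral_const_mul a _

lemma mip_sum (hμ : MopucSystem μ) (j : Fin r) {ι : Type*} (s : Finset ι)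
    (f : ι → Polynomial ℂ) (p : ℕ) :
    mip (μ j) (∑ i ∈ s, f i) p = ∑ i ∈ s, mip (μ j) (f i) p := by
  classical
  induction s using Finset.cons_induction with
  | empty => simp [mip_zero]
  | cons a s ha ih => rw [Finset.sum_cons, Finset.sum_cons, mip_add hμ, ih]

lemma mip_X_mul (hμ : MopucSystem μ) (j : Fin r) (P : Polynomial ℂ) (p : ℕ) :
    mip (μ j) (X * P) (p + 1) = mip (μ j) P p := by
  simp only [mip_def]
  refine integral_congr_ae ?_
  filter_upwards [ae_one hμ j] with z hz
  have h1 : z * (starRingEnd ℂ) z = 1 := by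
    rw [Complex.mul_conj]
    norm_cast
    rw [Complex.normSq_eq_norm_sq, hz, one_pow]
  have : Polynomial.eval z (X * P) = z * P.eval z := by simp
  rw [this, pow_succ, map_mul]
  calc z * Polynomial.eval z P * ((starRingEnd ℂ) (z ^ p) * (starRingEnd ℂ) z)
      = Polynomial.eval z P * (starRingEnd ℂ) (z ^ p) * (z * (starRingEnd ℂ) z) := by ring
    _ = Polynomial.eval z P * (starRingEnd ℂ) (z ^ p) := by rw [h1, mul_one]

lemma mom_eq (hμ : MopucSystem μ) (j : Fin r) (i p : ℕ) :
    (∫ z, z ^ i * (starRingEnd ℂ) (z ^ p) ∂(μ j)) = mom (μ j) ((i : ℤ) - (p : ℤ)) := by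
  refine integral_congr_ae ?_
  filter_upwards [ae_one hμ j] with z hz
  have hz0 : z ≠ 0 := by intro h; rw [h] at hz; simp at hz
  have h1 : z * (starRingEnd ℂ) z = 1 := by
    rw [Complex.mul_conj]
    norm_cast
    rw [Complex.normSq_eq_norm_sq, hz, one_pow]
  have hcz : (starRingEnd ℂ) z = z⁻¹ := (inv_eq_of_mul_eq_one_right h1).symm
  rw [zpow_sub₀ hz0, zpow_natCast, zpow_natCast, div_eq_mul_inv, map_pow, hcz, inv_pow]

lemma mip_eq_sum (hμ : MopucSystem μ) (j : Fin r) (P : Polynomial ℂ) {N : ℕ}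
    (hN : P.natDegree < N) (p : ℕ) :
    mip (μ j) P p = ∑ i ∈ Finset.range N, P.coeff i * mom (μ j) ((i : ℤ) - (p : ℤ)) := by
  rw [mip_def]
  have h1 : ∀ z : ℂ, P.eval z * (starRingEnd ℂ) (z ^ p)
      = ∑ i ∈ Finset.range N, (C (P.coeff i) * X ^ i : Polynomial ℂ).eval z * (starRingEnd ℂ) (z ^ p) := by
    intro z
    rw [Polynomial.eval_eq_sum_range' hN, Finset.sum_mul]
    simp
  rw [integral_congr_ae (Filter.Eventually.of_forall h1),
    integral_finset_sum _ (fun i _ => integrable_aux hμ j _ p)]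
  refine Finset.sum_congr rfl fun i _ => ?_
  have : ∀ z : ℂ, (C (P.coeff i) * X ^ i : Polynomial ℂ).eval z * (starRingEnd ℂ) (z ^ p)
      = P.coeff i * (z ^ i * (starRingEnd ℂ) (z ^ p)) := by intro z; simp [mul_assoc]
  rw [integral_congr_ae (Filter.Eventually.of_forall this), MeasureTheory.integral_const_mul,
    mom_eq hμ]

lemma linIdx_lt (m : Fin r → ℕ) (c : (j : Fin r) × Fin (m j)) : linIdx m c < ∑ j, m j := by
  classical
  have h1 : (∑ i ∈ Finset.univ.filter (fun i => i < c.1), m i) + m c.1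
      = ∑ i ∈ insert c.1 (Finset.univ.filter (fun i => i < c.1)), m i := by
    rw [Finset.sum_insert (by simp)]; ring
  have h2 : ∑ i ∈ insert c.1 (Finset.univ.filter (fun i => i < c.1)), m i ≤ ∑ j, m j :=
    Finset.sum_le_sum_of_subset (Finset.subset_univ _)
  have := c.2.isLt
  unfold linIdx
  omega

lemma linIdx_mono (m : Fin r → ℕ) {j j' : Fin r} (h : j < j') (q : Fin (m j)) (q' : Fin (m j')) :
    linIdx m ⟨j, q⟩ < linIdx m ⟨j', q'⟩ := by
  classical
  have h1 : (∑ i ∈ Finset.univ.filter (fun i => i < j), m i) + m j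
      ≤ ∑ i ∈ Finset.univ.filter (fun i => i < j'), m i := by
    rw [add_comm, ← Finset.sum_insert (s := Finset.univ.filter (fun i => i < j)) (by simp)]
    refine Finset.sum_le_sum_of_subset ?_
    intro x hx
    simp only [Finset.mem_insert, Finset.mem_filter, Finset.mem_univ, true_and] at *
    rcases hx with rfl | hx
    · exact h
    · exact lt_trans hx h
  have := q.isLt
  unfold linIdx
  simp only
  omega

lemma linIdx_injective (m : Fin r → ℕ) : Function.Injective (linIdx m) := by
  rintro ⟨j, q⟩ ⟨j', q'⟩ h
  rcases lt_trichotomy j j' with hlt | rfl | hlt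
  · exact absurd h (Nat.ne_of_lt (linIdx_mono m hlt q q'))
  · unfold linIdx at h
    simp only at h
    have : (q : ℕ) = q' := by omega
    exact congrArg _ (Fin.ext this)
  · exact absurd h.symm (Nat.ne_of_lt (linIdx_mono m hlt q' q))

lemma kernel_lemma (hμ : MopucSystem μ) {m : Fin r → ℕ} (hm : NormalIndex μ m)
    {P : Polynomial ℂ} (hdeg : ∀ i, ∑ j, m j ≤ i → P.coeff i = 0)
    (horth : ∀ j, ∀ p, p < m j → mip (μ j) P p = 0) : P = 0 := by
  classical
  rcases eq_or_ne P 0 with rfl | hP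
  · rfl
  have hdegN : P.natDegree < ∑ j, m j := by
    by_contra h
    exact hP (Polynomial.leadingCoeff_eq_zero.mp (hdeg _ (not_lt.mp h)))
  set N := ∑ j, m j with hN
  let f : ((j : Fin r) × Fin (m j)) → Fin N := fun c => ⟨linIdx m c, linIdx_lt m c⟩
  have hfinj : Function.Injective f := fun a b h =>
    linIdx_injective m (congrArg Fin.val h)
  have hfbij : Function.Bijective f :=
    (Fintype.bijective_iff_injective_and_card f).2 ⟨hfinj, by simp [Fintype.card_sigma, hN]⟩
  have hsum : ∀ g : ℕ → ℂ, (∑ c : (j : Fin r) × Fin (m j), g (linIdx m c))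
      = ∑ p ∈ Finset.range N, g p := by
    intro g
    rw [← Fin.sum_univ_eq_sum_range]
    exact Fintype.sum_bijective f hfbij _ _ (fun c => rfl)
  have hmv : (Mmat μ m).mulVec (fun c => P.coeff (linIdx m c)) = 0 := by
    funext rq
    have : (Mmat μ m).mulVec (fun c => P.coeff (linIdx m c)) rq
        = ∑ c : (j : Fin r) × Fin (m j),
          mom (μ rq.1) ((linIdx m c : ℤ) - ((rq.2 : ℕ) : ℤ)) * P.coeff (linIdx m c) := by
      simp [Matrix.mulVec, dotProduct, Mmat]
    rw [this, hsum (fun p => mom (μ rq.1) ((p : ℤ) - ((rq.2 : ℕ) : ℤ)) * P.coeff p)]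
    have := mip_eq_sum hμ rq.1 P hdegN (rq.2 : ℕ)
    rw [horth rq.1 rq.2 rq.2.isLt] at this
    rw [Finset.sum_congr rfl (fun i _ => mul_comm _ _), ← this]
    rfl
  have hinv : Invertible (Mmat μ m) := (Mmat μ m).invertibleOfIsUnitDet (Ne.isUnit hm)
  have hv : (fun c => P.coeff (linIdx m c)) = 0 := by
    apply Matrix.mulVec_injective_of_invertible (Mmat μ m)
    rw [hmv, Matrix.mulVec_zero]
  ext i
  rcases lt_or_ge i N with hi | hi
  · obtain ⟨c, hc⟩ := hfbij.2 ⟨i, hi⟩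
    have : P.coeff (linIdx m c) = 0 := congrFun hv c
    rwa [show linIdx m c = i from congrArg Fin.val hc] at this
  · simp [hdeg i hi]

lemma coeff_zero_of_deg_le {P : Polynomial ℂ} {S i : ℕ} (h : P.degree ≤ (S : WithBot ℕ))
    (hi : S < i) : P.coeff i = 0 :=
  Polynomial.coeff_eq_zero_of_degree_lt (lt_of_le_of_lt h (by exact_mod_cast hi))

lemma typeII_span (hμ : MopucSystem μ) {m : Fin r → ℕ} (hm : NormalIndex μ m)
    {P Q : Polynomial ℂ} (hQ : IsPhi μ m Q)
    (hdeg : ∀ i, ∑ j, m j < i → P.coeff i = 0)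
    (horth : ∀ j, ∀ p, p < m j → mip (μ j) P p = 0) :
    P = C (P.coeff (∑ j, m j)) * Q := by
  have hQN : Q.coeff (∑ j, m j) = 1 := by
    rw [← hQ.2.2]; exact hQ.2.1.coeff_natDegree
  have h0 : P - C (P.coeff (∑ j, m j)) * Q = 0 := by
    refine kernel_lemma hμ hm (fun i hi => ?_) (fun j p hp => ?_)
    · rcases eq_or_lt_of_le hi with rfl | hi'
      · simp [hQN]
      · have hq0 : Q.coeff i = 0 :=
          Polynomial.coeff_eq_zero_of_natDegree_lt (by rw [hQ.2.2]; exact hi')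
        rw [Polynomial.coeff_sub, hdeg i hi', Polynomial.coeff_C_mul, hq0]
        ring
    · rw [mip_sub hμ, mip_C_mul, horth j p hp, hQ.1.2.2 j p hp]
      ring
  exact sub_eq_zero.mp h0

lemma phi_coeff_zero {m : Fin r → ℕ} {P : Polynomial ℂ} (hP : IsPhi μ m P) {i : ℕ}
    (hi : ∑ j, m j < i) : P.coeff i = 0 :=
  Polynomial.coeff_eq_zero_of_natDegree_lt (by rw [hP.2.2]; exact hi)

lemma phi_unique (hμ : MopucSystem μ) {m : Fin r → ℕ} (hm : NormalIndex μ m)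
    {P Q : Polynomial ℂ} (hP : IsPhi μ m P) (hQ : IsPhi μ m Q) : P = Q := by
  have h := typeII_span hμ hm hQ (fun i hi => phi_coeff_zero hP hi) hP.1.2.2
  rwa [← hP.2.2, hP.2.1.coeff_natDegree, map_one, one_mul] at h

lemma eSub_self (n : Fin r → ℕ) (k : Fin r) : eSub n k k = n k - 1 :=
  Function.update_self _ _ _

lemma eSub_ne (n : Fin r → ℕ) {k j : Fin r} (h : j ≠ k) : eSub n k j = n j :=
  Function.update_of_ne h _ _

lemma eAdd_self (n : Fin r → ℕ) (k : Fin r) : eAdd n k k = n k + 1 :=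
  Function.update_self _ _ _

lemma eAdd_ne (n : Fin r → ℕ) {k j : Fin r} (h : j ≠ k) : eAdd n k j = n j :=
  Function.update_of_ne h _ _

lemma eSub_le (n : Fin r → ℕ) (k j : Fin r) : eSub n k j ≤ n j := by
  rcases eq_or_ne j k with rfl | h
  · rw [eSub_self]; omega
  · rw [eSub_ne n h]

lemma eSub_comm (n : Fin r → ℕ) {k l : Fin r} (hkl : k ≠ l) :
    eSub (eSub n k) l = eSub (eSub n l) k := by
  funext j
  rcases eq_or_ne j k with rfl | hk
  · rw [eSub_ne _ hkl, eSub_self, eSub_self, eSub_ne _ hkl]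
  · rcases eq_or_ne j l with rfl | hl
    · rw [eSub_self, eSub_ne _ hk, eSub_ne (eSub n j) hk, eSub_self]
    · rw [eSub_ne _ hl, eSub_ne _ hk, eSub_ne _ hk, eSub_ne _ hl]

lemma sum_eSub (n : Fin r → ℕ) (k : Fin r) (hk : 1 ≤ n k) :
    (∑ j, eSub n k j) + 1 = ∑ j, n j := by
  classical
  unfold eSub
  rw [Finset.sum_update_of_mem (Finset.mem_univ k),
    ← Finset.add_sum_erase Finset.univ n (Finset.mem_univ k), Finset.sdiff_singleton_eq_erase]
  omega

lemma sum_eAdd (n : Fin r → ℕ) (k : Fin r) : ∑ j, eAdd n k j = (∑ j, n j) + 1 := by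
  classical
  unfold eAdd
  rw [Finset.sum_update_of_mem (Finset.mem_univ k),
    ← Finset.add_sum_erase Finset.univ n (Finset.mem_univ k), Finset.sdiff_singleton_eq_erase]
  omega

lemma star_step (hμ : MopucSystem μ) {n : Fin r → ℕ} {k : Fin r} (hk : 1 ≤ n k)
    (hnk : NormalIndex μ (eSub n k)) {Φs Φsk Φk : Polynomial ℂ}
    (hΦs : IsPhiStar μ n Φs) (hΦsk : IsPhiStar μ (eSub n k) Φsk)
    (hΦk : IsPhi μ (eSub n k) Φk) :
    Φs = Φsk + C (Φs.coeff (∑ j, n j)) * (X * Φk) := by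
  have hNk : (∑ j, eSub n k j) + 1 = ∑ j, n j := sum_eSub n k hk
  have h0 : (Φs - Φsk).coeff 0 = 0 := by
    rw [Polynomial.coeff_sub, Polynomial.coeff_zero_eq_eval_zero,
      Polynomial.coeff_zero_eq_eval_zero, hΦs.2, hΦsk.2, sub_self]
  obtain ⟨G, hG⟩ := Polynomial.X_dvd_iff.mpr h0
  have hGc : ∀ i, G.coeff i = (Φs - Φsk).coeff (i + 1) := by
    intro i; rw [hG, Polynomial.coeff_X_mul]
  have hGspan : G = C (G.coeff (∑ j, eSub n k j)) * Φk := by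
    refine typeII_span hμ hnk hΦk (fun i hi => ?_) (fun j p hp => ?_)
    · rw [hGc, Polynomial.coeff_sub, coeff_zero_of_deg_le hΦs.1.2.1 (by omega),
        coeff_zero_of_deg_le hΦsk.1.2.1 (by omega), sub_self]
    · have h1 : mip (μ j) G p = mip (μ j) (Φs - Φsk) (p + 1) := by
        rw [← mip_X_mul hμ j G p, ← hG]
      rw [h1, mip_sub hμ, hΦs.1.2.2 j (p + 1) (by omega)
        (by have := eSub_le n k j; omega),
        hΦsk.1.2.2 j (p + 1) (by omega) (by omega), sub_self]
  have hGtop : G.coeff (∑ j, eSub n k j) = Φs.coeff (∑ j, n j) := by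
    rw [hGc, hNk, Polynomial.coeff_sub, coeff_zero_of_deg_le hΦsk.1.2.1 (by omega), sub_zero]
  rw [← hGtop]
  have := hG
  rw [hGspan] at this
  linear_combination this

end Aux

/-- compatibility conditions for the recurrence coefficients (`k ≠ l`,
`n k, n l ≥ 1`, with `n`, `n−e_k`, `n−e_l`, `n−e_k−e_l` normal):
(a) `β_n (α_{n−e_l} − α_{n−e_k}) = (β_{n−e_k} − β_{n−e_l}) α_{n−e_k−e_l}`;
(b) if moreover `n+e_k−e_l` is normal and all `n−e_j`, `n−e_l−e_j` in the grid are normal,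
then `(α_{n−e_l} − α_{n−e_k}) α_{n−e_l} ρ_{n,k} = (α_{n+e_k−e_l} − α_n) α_{n−e_k−e_l} ρ_{n−e_l,k}`. -/
theorem compatibility_coefficients (r : ℕ) (hr : 0 < r) (μ : Fin r → Measure ℂ)
    (hμ : MopucSystem μ) (n : Fin r → ℕ) (k l : Fin r) (hkl : k ≠ l)
    (hk : 1 ≤ n k) (hl : 1 ≤ n l)
    (hn : NormalIndex μ n) (hnk : NormalIndex μ (eSub n k))
    (hnl : NormalIndex μ (eSub n l)) (hnkl : NormalIndex μ (eSub (eSub n k) l))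
    (Φs : Polynomial ℂ) (hΦs : IsPhiStar μ n Φs)
    (Φk : Polynomial ℂ) (hΦk : IsPhi μ (eSub n k) Φk)
    (Φl : Polynomial ℂ) (hΦl : IsPhi μ (eSub n l) Φl)
    (Φsk : Polynomial ℂ) (hΦsk : IsPhiStar μ (eSub n k) Φsk)
    (Φsl : Polynomial ℂ) (hΦsl : IsPhiStar μ (eSub n l) Φsl)
    (Φkl : Polynomial ℂ) (hΦkl : IsPhi μ (eSub (eSub n k) l) Φkl) :
    Φs.coeff (∑ j, n j) * (Φl.eval 0 - Φk.eval 0)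
      = (Φsk.coeff (∑ j, eSub n k j) - Φsl.coeff (∑ j, eSub n l j)) * Φkl.eval 0 ∧
    (∀ (Φ Φplus : Polynomial ℂ) (Φ' Φ'' : Fin r → Polynomial ℂ) (ρ ρ' : Fin r → ℂ),
      NormalIndex μ (eAdd (eSub n l) k) →
      (∀ j, n j ≠ 0 → NormalIndex μ (eSub n j)) →
      (∀ j, eSub n l j ≠ 0 → NormalIndex μ (eSub (eSub n l) j)) →
      IsPhi μ n Φ → IsPhi μ (eAdd (eSub n l) k) Φplus →
      (∀ j, (n j = 0 → Φ' j = 0) ∧ (n j ≠ 0 → IsPhi μ (eSub n j) (Φ' j))) →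
      (∀ j, (eSub n l j = 0 → Φ'' j = 0) ∧
        (eSub n l j ≠ 0 → IsPhi μ (eSub (eSub n l) j) (Φ'' j))) →
      (∀ j, n j = 0 → ρ j = 0) →
      Φ = C (Φ.eval 0) * Φs + ∑ j, C (ρ j) * (X * Φ' j) →
      (∀ j, eSub n l j = 0 → ρ' j = 0) →
      Φl = C (Φl.eval 0) * Φsl + ∑ j, C (ρ' j) * (X * Φ'' j) →
      (Φl.eval 0 - Φk.eval 0) * Φl.eval 0 * ρ k
        = (Φplus.eval 0 - Φ.eval 0) * Φkl.eval 0 * ρ' k) := by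
  classical
  have hNk : (∑ j, eSub n k j) + 1 = ∑ j, n j := sum_eSub n k hk
  have hNl : (∑ j, eSub n l j) + 1 = ∑ j, n j := sum_eSub n l hl
  have hlk : (eSub n k) l = n l := eSub_ne n hkl.symm
  have hkl' : (eSub n l) k = n k := eSub_ne n hkl
  have hNkl : (∑ j, eSub (eSub n k) l j) + 1 = ∑ j, eSub n k j :=
    sum_eSub _ l (by rw [hlk]; exact hl)
  have hSkSl : (∑ j, eSub n l j) = ∑ j, eSub n k j := by omega
  obtain ⟨a, ha⟩ : ∃ a, n k = a + 1 := ⟨n k - 1, by omega⟩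
  -- the E relation : Φl − Φk = c Φ_{n−e_k−e_l}
  have hE : Φl - Φk = C ((Φl - Φk).coeff (∑ j, eSub (eSub n k) l j)) * Φkl := by
    refine typeII_span hμ hnkl hΦkl (fun i hi => ?_) (fun j p hp => ?_)
    · rw [Polynomial.coeff_sub]
      by_cases hiS : i = ∑ j, eSub n l j
      · have h1 : Φl.coeff (∑ j, eSub n l j) = 1 := by
          rw [← hΦl.2.2]; exact hΦl.2.1.coeff_natDegree
        have h2 : Φk.coeff (∑ j, eSub n l j) = 1 := by
          rw [hSkSl, ← hΦk.2.2]; exact hΦk.2.1.coeff_natDegree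
        rw [hiS, h1, h2, sub_self]
      · rw [phi_coeff_zero hΦl (by omega), phi_coeff_zero hΦk (by omega), sub_self]
    · have hpl : p < eSub n l j := lt_of_lt_of_le hp (by rw [eSub_comm n hkl]; exact eSub_le _ k j)
      have hpk : p < eSub n k j := lt_of_lt_of_le hp (eSub_le _ l j)
      rw [mip_sub hμ, hΦl.1.2.2 j p hpl, hΦk.1.2.2 j p hpk, sub_self]
  set c := (Φl - Φk).coeff (∑ j, eSub (eSub n k) l j) with hc
  have hc0 : Φl.eval 0 - Φk.eval 0 = c * Φkl.eval 0 := by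
    have := congrArg (Polynomial.eval 0) hE
    simpa using this
  set β := Φs.coeff (∑ j, n j) with hβ
  have hA : Φs = Φsk + C β * (X * Φk) := star_step hμ hk hnk hΦs hΦsk hΦk
  have hB : Φs = Φsl + C β * (X * Φl) := star_step hμ hl hnl hΦs hΦsl hΦl
  have hD : Φsk - Φsl = C β * (X * (C c * Φkl)) := by
    have h1 : Φsk + C β * (X * Φk) = Φsl + C β * (X * Φl) := by rw [← hA, ← hB]
    linear_combination h1 + C β * X * hE
  have hkl1 : Φkl.coeff (∑ j, eSub (eSub n k) l j) = 1 := by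
    rw [← hΦkl.2.2]; exact hΦkl.2.1.coeff_natDegree
  have hbeta : Φsk.coeff (∑ j, eSub n k j) - Φsl.coeff (∑ j, eSub n k j) = β * c := by
    have h := congrArg (fun P : Polynomial ℂ => P.coeff (∑ j, eSub n k j)) hD
    rw [Polynomial.coeff_sub, ← hNkl, Polynomial.coeff_C_mul, Polynomial.coeff_X_mul,
      Polynomial.coeff_C_mul, hkl1, mul_one] at h
    rwa [hNkl] at h
  constructor
  · rw [hSkSl]
    linear_combination β * hc0 - Φkl.eval 0 * hbeta
  -- part (b)
  intro Φ Φplus Φ' Φ'' ρ ρ' hplusN hall1 hall2 hΦ hΦplus hΦ' hΦ'' hρ0 hdec1 hρ'0 hdec2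
  have hnk0 : n k ≠ 0 := by omega
  have hΦ'k : Φ' k = Φk := phi_unique hμ hnk ((hΦ' k).2 hnk0) hΦk
  have hsubc : eSub (eSub n l) k = eSub (eSub n k) l := (eSub_comm n hkl).symm
  have hΦ''k : Φ'' k = Φkl := by
    have h1 := (hΦ'' k).2 (by rw [hkl']; exact hnk0)
    rw [hsubc] at h1
    exact phi_unique hμ hnkl h1 hΦkl
  have hplusSum : ∑ j, eAdd (eSub n l) k j = ∑ j, n j := by rw [sum_eAdd]; omega
  -- the d relation : Φ − Φplus = d Φ_{n−e_l}
  have hΦtop : Φ.coeff (∑ j, n j) = 1 := by rw [← hΦ.2.2]; exact hΦ.2.1.coeff_natDegree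
  have hplustop : Φplus.coeff (∑ j, n j) = 1 := by
    rw [← hplusSum, ← hΦplus.2.2]; exact hΦplus.2.1.coeff_natDegree
  have hdspan : Φ - Φplus = C ((Φ - Φplus).coeff (∑ j, eSub n l j)) * Φl := by
    refine typeII_span hμ hnl hΦl (fun i hi => ?_) (fun j p hp => ?_)
    · rw [Polynomial.coeff_sub]
      by_cases hiN : i = ∑ j, n j
      · rw [hiN, hΦtop, hplustop, sub_self]
      · rw [phi_coeff_zero hΦ (by omega), phi_coeff_zero hΦplus (by omega), sub_self]
    · have hp1 : p < n j := lt_of_lt_of_le hp (eSub_le n l j)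
      have hp2 : p < eAdd (eSub n l) k j := by
        rcases eq_or_ne j k with rfl | hne
        · rw [eAdd_self]; omega
        · rw [eAdd_ne _ hne]; exact hp
      rw [mip_sub hμ, hΦ.1.2.2 j p hp1, hΦplus.1.2.2 j p hp2, sub_self]
  set d := (Φ - Φplus).coeff (∑ j, eSub n l j) with hd
  have hd0 : Φ.eval 0 - Φplus.eval 0 = d * Φl.eval 0 := by
    have := congrArg (Polynomial.eval 0) hdspan
    simpa using this
  have hak : eSub (eSub n k) l k = a := by
    rw [eSub_ne _ hkl, eSub_self]; omega
  set T := mip (μ k) Φkl a with hT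
  have hTne : T ≠ 0 := by
    intro hT0
    refine hΦkl.2.1.ne_zero (kernel_lemma hμ hnl (fun i hi => ?_) (fun j p hp => ?_))
    · exact phi_coeff_zero hΦkl (by omega)
    · rcases eq_or_ne j k with rfl | hne
      · rw [hkl'] at hp
        rcases lt_or_ge p a with hpa | hpa
        · exact hΦkl.1.2.2 j p (by rw [hak]; exact hpa)
        · have hpa' : p = a := by omega
          rw [hpa']; exact hT0
      · refine hΦkl.1.2.2 j p ?_
        rw [← hsubc, eSub_ne _ hne]
        exact hp
  have hMk : mip (μ k) Φk a = -(c * T) := by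
    have h1 : Φk = Φl - C c * Φkl := by linear_combination -hE
    rw [h1, mip_sub hμ, mip_C_mul, hΦl.1.2.2 k a (by rw [hkl']; omega)]
    ring
  have hstar : mip (μ k) Φ (n k) = ρ k * mip (μ k) Φk a := by
    conv_lhs => rw [hdec1]
    rw [mip_add hμ, mip_C_mul, hΦs.1.2.2 k (n k) hk le_rfl, mip_sum hμ,
      Finset.sum_eq_single_of_mem k (Finset.mem_univ k) ?_]
    · rw [mip_C_mul, hΦ'k, ha, mip_X_mul hμ]
      ring
    · intro j _ hne
      rcases eq_or_ne (n j) 0 with hj0 | hj0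
      · rw [(hΦ' j).1 hj0, mul_zero, mul_zero, mip_zero]
      · rw [mip_C_mul, ha, mip_X_mul hμ,
          ((hΦ' j).2 hj0).1.2.2 k a (by rw [eSub_ne _ (Ne.symm hne)]; omega), mul_zero]
  have hstarl : mip (μ k) Φl (n k) = ρ' k * T := by
    conv_lhs => rw [hdec2]
    rw [mip_add hμ, mip_C_mul, hΦsl.1.2.2 k (n k) hk (by rw [hkl']), mip_sum hμ,
      Finset.sum_eq_single_of_mem k (Finset.mem_univ k) ?_]
    · rw [mip_C_mul, hΦ''k, ha, mip_X_mul hμ, hT]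
      ring
    · intro j _ hne
      rcases eq_or_ne (eSub n l j) 0 with hj0 | hj0
      · rw [(hΦ'' j).1 hj0, mul_zero, mul_zero, mip_zero]
      · rw [mip_C_mul, ha, mip_X_mul hμ,
          ((hΦ'' j).2 hj0).1.2.2 k a (by rw [eSub_ne _ (Ne.symm hne), hkl']; omega), mul_zero]
  have hdp : mip (μ k) Φ (n k) = d * mip (μ k) Φl (n k) := by
    have h1 : Φ = Φplus + C d * Φl := by linear_combination hdspan
    rw [h1, mip_add hμ, mip_C_mul,
      hΦplus.1.2.2 k (n k) (by rw [eAdd_self, hkl']; omega)]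
    ring
  have hkey : c * ρ k + d * ρ' k = 0 := by
    have h2 : ρ k * -(c * T) = d * (ρ' k * T) := by
      rw [← hMk, ← hstar, hdp, hstarl]
    have h3 : T * (c * ρ k + d * ρ' k) = 0 := by linear_combination -h2
    rcases mul_eq_zero.mp h3 with h | h
    · exact absurd h hTne
    · exact h
  linear_combination (Φl.eval 0 * ρ k) * hc0 + (Φkl.eval 0 * ρ' k) * hd0
    + (Φkl.eval 0 * Φl.eval 0) * hkey
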